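/- Let (q_k) be a sequence of integers with q_k ≥ 2 for all k, and let (ε_k) be a sequence of integers such that there is a constant C with |ε_k| ≤ C q_k for all k, and such that ε_k/q_k → α as k → ∞ for some irrational real number α. Then ∑_{k=1}^∞ ε_k/(q_1 q_2 ⋯ q_k) is irrational. -/

import Mathlib

/-!
The tails `T n = ∑ₖ εₙ₊ₖ / (qₙ ⋯ qₙ₊ₖ)` satisfy `T n = (εₙ + T (n + 1)) / qₙ` and are bounded.
Since `εₙ / qₙ` tends to an irrational number, `qₙ → ∞`, hence `T n → α`. If the sum `T 0` were a
rational `a / b`, the recurrence would make every `b * T n` an integer, and integers cannot converge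
to the irrational `b * α`.
-/

open Finset Filter Topology

noncomputable def cantorTail (q : ℕ → ℕ) (ε : ℕ → ℤ) (n : ℕ) : ℝ :=
  ∑' k, (ε (n + k) : ℝ) / ∏ i ∈ range (k + 1), (q (n + i) : ℝ)

theorem tendsto_atTop_of_tendsto_div_irrational {q : ℕ → ℕ} {ε : ℕ → ℤ} {α : ℝ}
    (hα : Irrational α) (htend : Tendsto (fun k => (ε k : ℝ) / q k) atTop (𝓝 α)) :
    Tendsto q atTop atTop := by
  refine tendsto_atTop.2 fun Q => ?_
  -- `α` stays a positive distance away from the finitely many lattices `ℤ / j`, `j ≤ Q`.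
  obtain ⟨δ, hδ, hδpos⟩ := ((hα.eventually_forall_le_dist_cast_div_of_denom_le Q).filter_mono
    nhdsWithin_le_nhds |>.and (self_mem_nhdsWithin (s := Set.Ioi 0))).exists
  filter_upwards [htend.eventually (Metric.ball_mem_nhds α hδpos)] with k hk
  by_contra! hqk
  exact (hδ (q k) hqk.le (ε k)).not_gt (by rwa [dist_comm])

section CantorTail

variable {q : ℕ → ℕ} {ε : ℕ → ℤ} {C : ℝ}

theorem abs_cantorTail_term_le (hq : ∀ k, 2 ≤ q k) (hC : ∀ k, |(ε k : ℝ) / q k| ≤ C)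
    (n k : ℕ) : |(ε (n + k) : ℝ) / ∏ i ∈ range (k + 1), (q (n + i) : ℝ)| ≤ C * (1 / 2) ^ k := by
  have hpow : (2 : ℝ) ^ k ≤ ∏ i ∈ range k, (q (n + i) : ℝ) := by
    have := pow_card_le_prod (range k) (fun i => q (n + i)) 2 fun i _ => hq (n + i)
    rw [card_range] at this
    exact_mod_cast this
  have hpos : (0 : ℝ) < 2 ^ k := by positivity
  rw [prod_range_succ, mul_comm, ← div_div, abs_div, abs_of_pos (hpos.trans_le hpow),
    one_div, inv_pow, ← div_eq_mul_inv]
  exact div_le_div₀ ((abs_nonneg _).trans (hC 0)) (hC _) hpos hpow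

theorem summable_cantorTail_term (hq : ∀ k, 2 ≤ q k) (hC : ∀ k, |(ε k : ℝ) / q k| ≤ C) (n : ℕ) :
    Summable fun k => (ε (n + k) : ℝ) / ∏ i ∈ range (k + 1), (q (n + i) : ℝ) :=
  .of_norm_bounded (summable_geometric_two.mul_left C) (abs_cantorTail_term_le hq hC n)

theorem abs_cantorTail_le (hq : ∀ k, 2 ≤ q k) (hC : ∀ k, |(ε k : ℝ) / q k| ≤ C) (n : ℕ) :
    |cantorTail q ε n| ≤ 2 * C := by
  calc |cantorTail q ε n|
      ≤ ∑' k, C * (1 / 2 : ℝ) ^ k :=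
        tsum_of_norm_bounded (f := fun k => (ε (n + k) : ℝ) / ∏ i ∈ range (k + 1), (q (n + i) : ℝ))
          (summable_geometric_two.mul_left C).hasSum (abs_cantorTail_term_le hq hC n)
    _ = 2 * C := by rw [tsum_mul_left, tsum_geometric_two, mul_comm]

theorem cantorTail_eq_div (hq : ∀ k, 2 ≤ q k) (hC : ∀ k, |(ε k : ℝ) / q k| ≤ C) (n : ℕ) :
    cantorTail q ε n = (ε n + cantorTail q ε (n + 1)) / q n := by
  have hqn : (q n : ℝ) ≠ 0 := by have := hq n; positivity
  rw [cantorTail, (summable_cantorTail_term hq hC n).tsum_eq_zero_add, add_div, cantorTail,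
    ← tsum_div_const]
  congr 1
  · simp
  · refine tsum_congr fun k => ?_
    rw [prod_range_succ', div_div, add_zero]
    simp only [← add_assoc, add_right_comm n 1]

theorem tendsto_cantorTail (hq : ∀ k, 2 ≤ q k) (hC : ∀ k, |(ε k : ℝ) / q k| ≤ C) {α : ℝ}
    (hα : Irrational α) (htend : Tendsto (fun k => (ε k : ℝ) / q k) atTop (𝓝 α)) :
    Tendsto (cantorTail q ε) atTop (𝓝 α) := by
  have hqinf : Tendsto (fun k => (q k : ℝ)) atTop atTop :=
    tendsto_natCast_atTop_iff.2 (tendsto_atTop_of_tendsto_div_irrational hα htend)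
  have hsmall : Tendsto (fun n => cantorTail q ε (n + 1) / q n) atTop (𝓝 0) :=
    squeeze_zero_norm (fun n => by
      rw [Real.norm_eq_abs, abs_div, Nat.abs_cast]; gcongr; exact abs_cantorTail_le hq hC (n + 1))
      (tendsto_const_nhds.div_atTop hqinf)
  rw [← add_zero α]
  exact (htend.add hsmall).congr fun n => by rw [cantorTail_eq_div hq hC n, add_div]

theorem mul_cantorTail_mem_range_intCast (hq : ∀ k, 2 ≤ q k)
    (hC : ∀ k, |(ε k : ℝ) / q k| ≤ C) {d : ℤ}
    (h₀ : (d : ℝ) * cantorTail q ε 0 ∈ Set.range ((↑) : ℤ → ℝ)) (n : ℕ) :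
    (d : ℝ) * cantorTail q ε n ∈ Set.range ((↑) : ℤ → ℝ) := by
  induction n with
  | zero => exact h₀
  | succ n ih =>
    obtain ⟨z, hz⟩ := ih
    have hqn : (q n : ℝ) ≠ 0 := by have := hq n; positivity
    refine ⟨q n * z - d * ε n, ?_⟩
    rw [cantorTail_eq_div hq hC n] at hz
    field_simp at hz
    push_cast
    linear_combination hz

end CantorTail

theorem cantor_irrational_of_ratio_tendsto_irrational_general
    (q : ℕ → ℕ) (hq : ∀ k, 2 ≤ q k) (ε : ℕ → ℤ)
    (α : ℝ) (hα : Irrational α)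
    (htend : Filter.Tendsto (fun k : ℕ => (ε k : ℝ) / (q k : ℝ)) Filter.atTop (nhds α)) :
    Irrational (∑' k : ℕ, (ε k : ℝ) / ∏ i ∈ Finset.range (k + 1), (q i : ℝ)) := by
  obtain ⟨C, hC⟩ := isBounded_iff_forall_norm_le.1 (Metric.isBounded_range_of_tendsto _ htend)
  replace hC : ∀ k, |(ε k : ℝ) / q k| ≤ C := fun k => hC _ ⟨k, rfl⟩
  rintro ⟨r, hr⟩
  have h₀ : ((r.den : ℤ) : ℝ) * cantorTail q ε 0 ∈ Set.range ((↑) : ℤ → ℝ) :=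
    ⟨r.num, by simp [cantorTail, ← hr, Rat.cast_def, mul_div_cancel₀, r.den_nz]⟩
  have hint : Tendsto (fun n => (r.den : ℤ) * cantorTail q ε n) atTop (𝓝 ((r.den : ℤ) * α)) :=
    (tendsto_cantorTail hq hC hα htend).const_mul _
  obtain ⟨z, hz⟩ := Real.isClosed_range_intCast.mem_of_tendsto hint
    (Eventually.of_forall (mul_cantorTail_mem_range_intCast hq hC h₀))
  exact (hα.intCast_mul (by exact_mod_cast r.den_nz)).ne_int z hz.symm

/-- (Oppenheim; Tijdeman–Yuan) Let `(q_k)` be integers `≥ 2` and `(ε_k)`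
integers with `ε_k = O(q_k)` and `ε_k/q_k → α` for some irrational `α`. Then
`∑ ε_k/(q_1⋯q_k)` is irrational. (Sequences are 0-indexed.) -/
theorem cantor_irrational_of_ratio_tendsto_irrational
    (q : ℕ → ℕ) (hq : ∀ k, 2 ≤ q k) (ε : ℕ → ℤ)
    (hO : ∃ C : ℝ, ∀ k, (|ε k| : ℝ) ≤ C * (q k : ℝ))
    (α : ℝ) (hα : Irrational α)
    (htend : Filter.Tendsto (fun k : ℕ => (ε k : ℝ) / (q k : ℝ)) Filter.atTop (nhds α)) :
    Irrational (∑' k : ℕ, (ε k : ℝ) / ∏ i ∈ Finset.range (k + 1), (q i : ℝ)) :=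
  cantor_irrational_of_ratio_tendsto_irrational_general q hq ε α hα htend
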